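/- Let c̄, s̄, f, g, r be real with r ≠ 0, and suppose the exact values c = f/r', s = g/r' with r' = sqrt(f^2+g^2) differ from c̄, s̄ by δc, δs. If c̄^2 + s̄^2 = 1 and c̄*g - s̄*f = 0 and f^2+g^2 = r^2 with r > 0, then δc = δs = 0 or (δc, δs) = (-2c̄, -2s̄); combined with the sign condition c̄*f + s̄*g > 0 the only solution is δc = δs = 0. (Exact satisfaction of the first two conditions plus positivity characterizes the exact rotation.) -/

import Mathlib

/-! With `t = c̄ f + s̄ g`, the two conditions give `c̄ t = f` and `s̄ t = g`, hence `t² = f² + g²`;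
positivity of `t` then forces `t = r`. -/

section UnitParallel

variable {R : Type*} [CommRing R] {c s f g : R}

theorem mul_dot_eq_of_unit_of_parallel (hnorm : c ^ 2 + s ^ 2 = 1) (hpar : c * g = s * f) :
    c * (c * f + s * g) = f ∧ s * (c * f + s * g) = g :=
  ⟨by linear_combination f * hnorm + s * hpar, by linear_combination g * hnorm - c * hpar⟩

theorem dot_sq_eq_of_unit_of_parallel (hnorm : c ^ 2 + s ^ 2 = 1) (hpar : c * g = s * f) :
    (c * f + s * g) ^ 2 = f ^ 2 + g ^ 2 := by
  obtain ⟨hf, hg⟩ := mul_dot_eq_of_unit_of_parallel hnorm hpar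
  calc (c * f + s * g) ^ 2 = (c ^ 2 + s ^ 2) * (c * f + s * g) ^ 2 := by rw [hnorm, one_mul]
    _ = (c * (c * f + s * g)) ^ 2 + (s * (c * f + s * g)) ^ 2 := by ring
    _ = f ^ 2 + g ^ 2 := by rw [hf, hg]

end UnitParallel

theorem stmt_12_general (f g cb sb : ℝ)
    (r : ℝ) (hr : r = Real.sqrt (f^2 + g^2))
    (hnorm : cb^2 + sb^2 = 1) (horth : cb * g = sb * f)
    (hpos : cb * f + sb * g > 0) :
    cb = f / r ∧ sb = g / r := by
  obtain ⟨hf, hg⟩ := mul_dot_eq_of_unit_of_parallel hnorm horth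
  have hr_dot : r = cb * f + sb * g := by
    rw [hr, ← dot_sq_eq_of_unit_of_parallel hnorm horth, Real.sqrt_sq hpos.le]
  subst hr_dot
  exact ⟨eq_div_of_mul_eq hpos.ne' hf, eq_div_of_mul_eq hpos.ne' hg⟩

theorem stmt_12 (f g cb sb : ℝ) (h : f^2 + g^2 > 0)
    (r : ℝ) (hr : r = Real.sqrt (f^2 + g^2))
    (hnorm : cb^2 + sb^2 = 1) (horth : cb * g = sb * f)
    (hpos : cb * f + sb * g > 0) :
    cb = f / r ∧ sb = g / r :=
  stmt_12_general f g cb sb r hr hnorm horth hpos
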